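/- Let G be a finite simple graph that contains no induced subgraph isomorphic to a subdivision of K_4. Then no vertex of G can be linked to a hole of G. That is, there do not exist a hole C of G, a vertex v not in C, and three induced paths P_1, P_2, P_3 such that: the union of the interiors of P_1, P_2, P_3 together with v is disjoint from C; each P_i has one end v and the other end in C, with no other edges between P_i and C; for distinct i, j the paths P_i and P_j share only the vertex v; whenever a vertex of P_i is adjacent to a vertex of P_j (i ≠ j), either one of them is v or both lie in C; and every neighbor of v in C lies on some P_i. -/

import Mathlib

open SimpleGraph

/-- `G` contains a subdivision of `K₄` as a (not necessarily induced) subgraph: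
there are four branch vertices joined by six pairwise internally disjoint paths. -/
def HasK4Subdivision {V : Type*} (G : SimpleGraph V) : Prop :=
  ∃ b : Fin 4 → V, Function.Injective b ∧
    ∃ P : ∀ i j : Fin 4, i < j → G.Walk (b i) (b j),
      (∀ (i j : Fin 4) (hij : i < j), (P i j hij).IsPath) ∧
      (∀ (i j : Fin 4) (hij : i < j) (k l : Fin 4) (hkl : k < l), (i, j) ≠ (k, l) → ∀ w,
        w ∈ (P i j hij).support → w ∈ (P k l hkl).support →
          (w = b i ∨ w = b j) ∧ (w = b k ∨ w = b l))

/-- A graph is series-parallel if it contains no subdivision of `K₄` as a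
(not necessarily induced) subgraph. -/
def SeriesParallel {V : Type*} (G : SimpleGraph V) : Prop := ¬ HasK4Subdivision G

/-- `G` has an induced subgraph isomorphic to a subdivision of `K₄`: four branch
vertices joined by six pairwise internally disjoint paths, such that every edge of `G`
between vertices of the union of the paths is an edge of one of the paths. -/
def HasInducedK4Subdivision {V : Type*} (G : SimpleGraph V) : Prop :=
  ∃ b : Fin 4 → V, Function.Injective b ∧
    ∃ P : ∀ i j : Fin 4, i < j → G.Walk (b i) (b j),
      (∀ (i j : Fin 4) (hij : i < j), (P i j hij).IsPath) ∧
      (∀ (i j : Fin 4) (hij : i < j) (k l : Fin 4) (hkl : k < l), (i, j) ≠ (k, l) → ∀ w,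
        w ∈ (P i j hij).support → w ∈ (P k l hkl).support →
          (w = b i ∨ w = b j) ∧ (w = b k ∨ w = b l)) ∧
      (∀ a c : V, (∃ (i j : Fin 4) (hij : i < j), a ∈ (P i j hij).support) →
        (∃ (i j : Fin 4) (hij : i < j), c ∈ (P i j hij).support) → G.Adj a c →
          ∃ (i j : Fin 4) (hij : i < j), s(a, c) ∈ (P i j hij).edges)

/-- `G` is ISK4-free: no induced subgraph of `G` is a subdivision of `K₄`. -/
def ISK4Free {V : Type*} (G : SimpleGraph V) : Prop := ¬ HasInducedK4Subdivision G

/-- `G` is triangle-free. -/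
def TriangleFree {V : Type*} (G : SimpleGraph V) : Prop := G.CliqueFree 3

/-- `G` has no induced subgraph isomorphic to `K₃,₃`. -/
def K33Free {V : Type*} (G : SimpleGraph V) : Prop :=
  ¬ ∃ a b : Fin 3 → V, Function.Injective a ∧ Function.Injective b ∧
    (∀ i j, a i ≠ b j) ∧ (∀ i j, G.Adj (a i) (b j)) ∧
    (∀ i j, ¬ G.Adj (a i) (a j)) ∧ (∀ i j, ¬ G.Adj (b i) (b j))

/-- `C` is the vertex set of an induced cycle of `G`: the induced subgraph on `C` is
connected and every vertex of `C` has exactly two neighbors in `C`. -/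
def IsInducedCycle {V : Type*} (G : SimpleGraph V) (C : Set V) : Prop :=
  C.Finite ∧ 3 ≤ C.ncard ∧ (G.induce C).Connected ∧
    ∀ v ∈ C, (G.neighborSet v ∩ C).ncard = 2

/-- A hole is an induced cycle of length at least 4. -/
def IsHole {V : Type*} (G : SimpleGraph V) (C : Set V) : Prop :=
  IsInducedCycle G C ∧ 4 ≤ C.ncard

/-- `(C, x)` is a wheel: `C` is a hole and `x` has at least three neighbors in `C`. -/
def IsWheel {V : Type*} (G : SimpleGraph V) (C : Set V) (x : V) : Prop :=
  IsHole G C ∧ x ∉ C ∧ 3 ≤ (G.neighborSet x ∩ C).ncard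

/-- The number of spokes of the wheel `(C, x)`. -/
noncomputable def numSpokes {V : Type*} (G : SimpleGraph V) (C : Set V) (x : V) : ℕ :=
  (G.neighborSet x ∩ C).ncard

/-- `S` is (the vertex set of) a sector of the wheel `(C, x)`: a maximal path of the
hole `C` containing no spoke (neighbor of `x`) in its interior.  Here this is rendered
as: `S` is maximal among the subsets of `C` inducing a connected subgraph in which no
vertex with two neighbors inside the subset is a neighbor of `x`. -/
def IsSector {V : Type*} (G : SimpleGraph V) (C : Set V) (x : V) (S : Set V) : Prop :=
  S ⊆ C ∧ (G.induce S).Connected ∧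
  (∀ v ∈ S, (G.neighborSet v ∩ S).ncard = 2 → ¬ G.Adj x v) ∧
  (∀ T, S ⊆ T → T ⊆ C → (G.induce T).Connected →
    (∀ v ∈ T, (G.neighborSet v ∩ T).ncard = 2 → ¬ G.Adj x v) → T = S)

/-- The interior of a sector of a wheel with center `x`: the sector minus its two
ends (which are spokes, i.e. neighbors of `x`). -/
def sectorInterior {V : Type*} (G : SimpleGraph V) (x : V) (S : Set V) : Set V :=
  S \ G.neighborSet x

/-- The wheel `(C, x)` is a proper wheel in `G`. -/
def IsProperWheel {V : Type*} (G : SimpleGraph V) (C : Set V) (x : V) : Prop :=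
  IsWheel G C x ∧ ∀ v, v ∉ C → v ≠ x →
    (∃ S, IsSector G C x S ∧ G.neighborSet v ∩ C ⊆ S) ∧
    (3 ≤ (G.neighborSet v ∩ C).ncard → G.Adj v x)

/-- The wheel `(C, x)` is a proper wheel in the subgraph of `G` induced by `A`. -/
def IsProperWheelOn {V : Type*} (G : SimpleGraph V) (A : Set V) (C : Set V) (x : V) : Prop :=
  C ⊆ A ∧ x ∈ A ∧ IsWheel G C x ∧
  ∀ v ∈ A, v ∉ C → v ≠ x →
    (∃ S, IsSector G C x S ∧ G.neighborSet v ∩ C ⊆ S) ∧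
    (3 ≤ (G.neighborSet v ∩ C).ncard → G.Adj v x)

/-- `p` is an induced path in `G`. -/
def IsInducedPath {V : Type*} {u w : V} (G : SimpleGraph V) (p : G.Walk u w) : Prop :=
  p.IsPath ∧ ∀ a ∈ p.support, ∀ b ∈ p.support, G.Adj a b → s(a, b) ∈ p.edges

/-- `K` is (the vertex set of) a connected component of the subgraph of `G` induced
by `A`. -/
def IsCompOf {V : Type*} (G : SimpleGraph V) (A : Set V) (K : Set V) : Prop :=
  K ⊆ A ∧ (G.induce K).Connected ∧ ∀ a ∈ K, ∀ b ∈ A, G.Adj a b → b ∈ K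

/-- `x` is a non-offensive vertex for the wheel `(C, v)`. -/
def NonOffensive {V : Type*} (G : SimpleGraph V) (C : Set V) (v x : V) : Prop :=
  ∃ S1 S2 : Set V, IsSector G C v S1 ∧ IsSector G C v S2 ∧ S1 ≠ S2 ∧
    (S1 ∩ S2).Nonempty ∧ G.Adj x v ∧
    (G.neighborSet x ∩ S1).Nonempty ∧ (G.neighborSet x ∩ S2).Nonempty ∧
    G.neighborSet x ∩ C ⊆ S1 ∪ S2 ∧
    ∀ u, u ∉ C → u ≠ v → G.Adj u x → G.neighborSet u ∩ C ⊆ S1 ∪ S2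

/-- `x` is an `a`-non-offensive vertex for the wheel `(C, v)`: it is non-offensive,
witnessed by two consecutive sectors meeting exactly in `{a}`. -/
def ANonOffensive {V : Type*} (G : SimpleGraph V) (C : Set V) (v a x : V) : Prop :=
  ∃ S1 S2 : Set V, IsSector G C v S1 ∧ IsSector G C v S2 ∧ S1 ≠ S2 ∧
    S1 ∩ S2 = {a} ∧ G.Adj x v ∧
    (G.neighborSet x ∩ S1).Nonempty ∧ (G.neighborSet x ∩ S2).Nonempty ∧
    G.neighborSet x ∩ C ⊆ S1 ∪ S2 ∧
    ∀ u, u ∉ C → u ≠ v → G.Adj u x → G.neighborSet u ∩ C ⊆ S1 ∪ S2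

/-- The wheel `(C, v)` is `k`-almost proper, witnessed by the spokes `xs 0, …, xs (k-1)`
(no two of which lie in a common sector) and the set `X` of vertices outside the wheel:
the wheel is proper in `G \ X`, and every member of `X` is `xs i`-non-offensive for
some `i`. -/
def IsAlmostProperWheel {V : Type*} (G : SimpleGraph V) (C : Set V) (v : V) (k : ℕ)
    (xs : Fin k → V) (X : Set V) : Prop :=
  IsWheel G C v ∧
  (∀ i, xs i ∈ G.neighborSet v ∩ C) ∧
  (∀ i j, i ≠ j → ¬ ∃ S, IsSector G C v S ∧ xs i ∈ S ∧ xs j ∈ S) ∧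
  (∀ x ∈ X, x ∉ C ∧ x ≠ v) ∧
  (∀ u, u ∉ C → u ≠ v → u ∉ X →
    (∃ S, IsSector G C v S ∧ G.neighborSet u ∩ C ⊆ S) ∧
    (3 ≤ (G.neighborSet u ∩ C).ncard → G.Adj u v)) ∧
  (∀ x ∈ X, ∃ i, ANonOffensive G C v (xs i) x)

/-- The induced subgraph on `S` is a subdivision of `K₁,₃` with `a`, `b`, `c` as its
vertices of degree one (equivalently, a tree whose set of leaves is exactly `{a, b, c}`). -/
def IsK13SubdivisionWithLeaves {V : Type*} (G : SimpleGraph V) (S : Set V) (a b c : V) : Prop :=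
  a ∈ S ∧ b ∈ S ∧ c ∈ S ∧ a ≠ b ∧ a ≠ c ∧ b ≠ c ∧
  (G.induce S).Connected ∧ (G.induce S).IsAcyclic ∧
  ∀ v ∈ S, ((G.neighborSet v ∩ S).ncard = 1 ↔ v = a ∨ v = b ∨ v = c)

/-- Adjacency relation of the graph obtained from `G` by contracting the set `K`
to the single new vertex `none`. -/
def contractAdj {V : Type*} (G : SimpleGraph V) (K : Set V) :
    Option {v : V // v ∉ K} → Option {v : V // v ∉ K} → Prop
  | some a, some b => G.Adj a.1 b.1
  | some a, none => ∃ k ∈ K, G.Adj a.1 k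
  | none, some b => ∃ k ∈ K, G.Adj k b.1
  | none, none => False

/-- The graph obtained from `G` by contracting `K` to the single new vertex `none`
(deleting arising loops and parallel edges). -/
def contractSet {V : Type*} (G : SimpleGraph V) (K : Set V) :
    SimpleGraph (Option {v : V // v ∉ K}) where
  Adj := contractAdj G K
  symm := by
    constructor
    intro a b h
    match a, b, h with
    | none, none, h => exact False.elim h
    | none, some b, ⟨k, hk, ha⟩ => exact ⟨k, hk, ha.symm⟩
    | some a, none, ⟨k, hk, ha⟩ => exact ⟨k, hk, ha.symm⟩
    | some a, some b, h => exact G.symm.symm _ _ h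
  loopless := by
    constructor
    rintro (_ | a) h
    · exact False.elim h
    · exact G.loopless.irrefl a.1 h

/-! The hole splits at the attachment points `c 0, c 1, c 2` into three arcs. These arcs and
the three paths from `v` are the six paths of a subdivision of `K₄` with branch vertices
`v, c 0, c 1, c 2`, and the conditions on the edges between the paths and the hole say exactly
that this subdivision is induced. -/

section
variable {V : Type*} {G : SimpleGraph V}

lemma SimpleGraph.Walk.IsCycle.eq_or_eq_of_mem_support_append {a b w : V} {A : G.Walk a b}
    {R : G.Walk b a} (h : (A.append R).IsCycle) (hA : w ∈ A.support) (hR : w ∈ R.support) :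
    w = a ∨ w = b := by
  have hnd := h.support_nodup
  rw [Walk.tail_support_append] at hnd
  rcases (Walk.mem_support_iff _).1 hA with rfl | hA'
  · exact Or.inl rfl
  rcases (Walk.mem_support_iff _).1 hR with rfl | hR'
  · exact Or.inr rfl
  exact absurd hR' (List.disjoint_of_nodup_append hnd hA')

lemma IsInducedCycle.ncard_neighborSet_induce {C : Set V} (hC : IsInducedCycle G C) (x : C) :
    ((G.induce C).neighborSet x).ncard = 2 := by
  have himage : Subtype.val '' (G.induce C).neighborSet x = G.neighborSet x ∩ C := by
    ext b
    constructor
    · rintro ⟨y, hy, rfl⟩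
      exact ⟨hy, y.2⟩
    · rintro ⟨hb, hbC⟩
      exact ⟨⟨b, hbC⟩, hb, rfl⟩
  rw [← Set.ncard_image_of_injective _ Subtype.val_injective, himage]
  exact hC.2.2.2 x x.2

lemma IsInducedCycle.exists_isCycle {C : Set V} (hC : IsInducedCycle G C) {u : V} (hu : u ∈ C) :
    ∃ q : G.Walk u u, q.IsCycle ∧ (∀ w, w ∈ q.support ↔ w ∈ C) ∧
      ∀ a ∈ C, ∀ b ∈ C, G.Adj a b → s(a, b) ∈ q.edges := by
  classical
  have : Fintype C := hC.1.fintype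
  have hcyc : (G.induce C).IsCycles := fun x _ => hC.ncard_neighborSet_induce x
  have hnonempty : ((G.induce C).neighborSet ⟨u, hu⟩).Nonempty :=
    Set.nonempty_of_ncard_ne_zero (by simp [hC.ncard_neighborSet_induce])
  obtain ⟨p, hp, hverts⟩ := hcyc.exists_cycle_toSubgraph_verts_eq_connectedComponentSupp
    (c := (G.induce C).connectedComponentMk ⟨u, hu⟩) rfl hnonempty
  have hspan : ∀ x, x ∈ p.support := fun x => by
    rw [← Walk.mem_verts_toSubgraph, hverts, ConnectedComponent.mem_supp_iff,
      ConnectedComponent.eq]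
    exact hC.2.2.1.preconnected x _
  let ι : G.induce C →g G := (Embedding.induce C).toHom
  have hsupport : ∀ w, w ∈ (p.map ι).support ↔ w ∈ C := fun w => by
    simp only [Walk.support_map, List.mem_map]
    exact ⟨fun ⟨x, _, hx⟩ => hx ▸ x.2, fun hw => ⟨⟨w, hw⟩, hspan _, rfl⟩⟩
  have hedges : ∀ a ∈ C, ∀ b ∈ C, G.Adj a b → s(a, b) ∈ (p.map ι).edges := fun a ha b hb hab => by
    have hadj : p.toSubgraph.Adj ⟨a, ha⟩ ⟨b, hb⟩ :=
      (hp.adj_toSubgraph_iff_of_isCycles hcyc (p.mem_verts_toSubgraph.2 (hspan _)) _).2 hab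
    rw [Walk.edges_map, List.mem_map]
    exact ⟨_, p.mem_edges_toSubgraph.1 (Subgraph.mem_edgeSet.2 hadj), rfl⟩
  exact ⟨p.map ι, (Walk.isCycle_map_iff_of_injective Subtype.val_injective).2 hp, hsupport, hedges⟩

structure IsArcDecomposition (C : Set V) {a b c : V} (Qab : G.Walk a b) (Qac : G.Walk a c)
    (Qbc : G.Walk b c) : Prop where
  isPath_ab : Qab.IsPath
  isPath_ac : Qac.IsPath
  isPath_bc : Qbc.IsPath
  eq_of_mem_ab_ac : ∀ w ∈ Qab.support, w ∈ Qac.support → w = a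
  eq_of_mem_ab_bc : ∀ w ∈ Qab.support, w ∈ Qbc.support → w = b
  eq_of_mem_ac_bc : ∀ w ∈ Qac.support, w ∈ Qbc.support → w = c
  mem_of_mem_support : ∀ w, w ∈ Qab.support ∨ w ∈ Qac.support ∨ w ∈ Qbc.support → w ∈ C
  mem_edges_of_adj : ∀ x ∈ C, ∀ y ∈ C, G.Adj x y →
    s(x, y) ∈ Qab.edges ∨ s(x, y) ∈ Qac.edges ∨ s(x, y) ∈ Qbc.edges

namespace IsArcDecomposition
variable {C : Set V} {a b c : V} {Qab : G.Walk a b} {Qac : G.Walk a c} {Qbc : G.Walk b c}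

lemma notMem_support_ab (hQ : IsArcDecomposition C Qab Qac Qbc) (hac : a ≠ c) :
    c ∉ Qab.support := fun h => hac (hQ.eq_of_mem_ab_ac c h Qac.end_mem_support).symm

lemma notMem_support_ac (hQ : IsArcDecomposition C Qab Qac Qbc) (hab : a ≠ b) :
    b ∉ Qac.support := fun h => hab (hQ.eq_of_mem_ab_ac b Qab.end_mem_support h).symm

lemma notMem_support_bc (hQ : IsArcDecomposition C Qab Qac Qbc) (hac : a ≠ c) :
    a ∉ Qbc.support := fun h => hac (hQ.eq_of_mem_ac_bc a Qac.start_mem_support h)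

end IsArcDecomposition

lemma exists_arcDecomposition_of_theta {C : Set V} {a b c : V} {A : G.Walk a b}
    {R : G.Walk b a} (hA : A.IsPath) (hR : R.IsPath)
    (hAR : ∀ w ∈ A.support, w ∈ R.support → w = a ∨ w = b)
    (hsupp : ∀ w, w ∈ A.support ∨ w ∈ R.support → w ∈ C)
    (hedges : ∀ x ∈ C, ∀ y ∈ C, G.Adj x y → s(x, y) ∈ A.edges ∨ s(x, y) ∈ R.edges)
    (hc : c ∈ R.support) (hca : c ≠ a) (hcb : c ≠ b) :
    ∃ (Qab : G.Walk a b) (Qac : G.Walk a c) (Qbc : G.Walk b c),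
      IsArcDecomposition C Qab Qac Qbc := by
  classical
  have hspec := R.take_spec hc
  set R₁ := R.takeUntil c hc
  set R₂ := R.dropUntil c hc
  have hR₁₂ : (R₁.append R₂).IsPath := hspec ▸ hR
  have hR₁₂_inter : ∀ w ∈ R₁.support, w ∈ R₂.support → w = c := fun w h₁ h₂ => by
    by_contra hne
    exact hR₁₂.ne_of_mem_support_of_append hne h₁ h₂ rfl
  have hR₁ : ∀ w ∈ R₁.support, w ∈ R.support := fun w => (R.support_takeUntil_subset_support hc ·)
  have hR₂ : ∀ w ∈ R₂.support, w ∈ R.support := fun w => (R.support_dropUntil_subset_support hc ·)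
  refine ⟨A, R₂.reverse, R₁, hA, hR₁₂.of_append_right.reverse, hR₁₂.of_append_left, ?_, ?_, ?_,
    ?_, ?_⟩
  · intro w hwA hw₂
    rw [Walk.support_reverse, List.mem_reverse] at hw₂
    refine (hAR w hwA (hR₂ w hw₂)).resolve_right ?_
    rintro rfl
    exact hcb (hR₁₂_inter w R₁.start_mem_support hw₂).symm
  · intro w hwA hw₁
    refine (hAR w hwA (hR₁ w hw₁)).resolve_left ?_
    rintro rfl
    exact hca (hR₁₂_inter w hw₁ R₂.end_mem_support).symm
  · intro w hw₂ hw₁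
    rw [Walk.support_reverse, List.mem_reverse] at hw₂
    exact hR₁₂_inter w hw₁ hw₂
  · rintro w (hw | hw | hw)
    · exact hsupp w (Or.inl hw)
    · rw [Walk.support_reverse, List.mem_reverse] at hw
      exact hsupp w (Or.inr (hR₂ w hw))
    · exact hsupp w (Or.inr (hR₁ w hw))
  · intro x hx y hy hxy
    rcases hedges x hx y hy hxy with h | h
    · exact Or.inl h
    rw [← hspec, Walk.edges_append, List.mem_append] at h
    rw [Walk.edges_reverse, List.mem_reverse]
    tauto

lemma IsInducedCycle.exists_arcDecomposition {C : Set V} (hC : IsInducedCycle G C) {a b c : V}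
    (ha : a ∈ C) (hb : b ∈ C) (hc : c ∈ C) (hab : a ≠ b) (hac : a ≠ c) (hbc : b ≠ c) :
    ∃ (Qab : G.Walk a b) (Qac : G.Walk a c) (Qbc : G.Walk b c),
      IsArcDecomposition C Qab Qac Qbc := by
  classical
  obtain ⟨q, hq, hsupp, hedges⟩ := hC.exists_isCycle ha
  have hbq : b ∈ q.support := (hsupp b).2 hb
  have hspec := q.take_spec hbq
  set A := q.takeUntil b hbq
  set R := q.dropUntil b hbq
  have hAR : (A.append R).IsCycle := hspec ▸ hq
  have hA : A.IsPath := hq.isPath_takeUntil hbq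
  have hR : R.IsPath := hAR.isPath_of_append_right (Walk.not_nil_of_ne hab)
  have hsupp' : ∀ w, w ∈ A.support ∨ w ∈ R.support → w ∈ C := fun w hw =>
    (hsupp w).1 (hspec ▸ (Walk.mem_support_append_iff A R).2 hw)
  have hedges' : ∀ x ∈ C, ∀ y ∈ C, G.Adj x y → s(x, y) ∈ A.edges ∨ s(x, y) ∈ R.edges :=
    fun x hx y hy hxy => by
      have := hedges x hx y hy hxy
      rwa [← hspec, Walk.edges_append, List.mem_append] at this
  rcases (Walk.mem_support_append_iff A R).1 (hspec ▸ (hsupp c).2 hc) with hcA | hcR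
  · refine exists_arcDecomposition_of_theta hR.reverse hA.reverse ?_ ?_ ?_
      (by rwa [Walk.support_reverse, List.mem_reverse]) hac.symm hbc.symm
    · intro w hwR hwA
      rw [Walk.support_reverse, List.mem_reverse] at hwR hwA
      exact hAR.eq_or_eq_of_mem_support_append hwA hwR
    · simp only [Walk.support_reverse, List.mem_reverse]
      exact fun w hw => hsupp' w hw.symm
    · simp only [Walk.edges_reverse, List.mem_reverse]
      exact fun x hx y hy hxy => (hedges' x hx y hy hxy).symm
  · exact exists_arcDecomposition_of_theta hA hR
      (fun w hwA hwR => hAR.eq_or_eq_of_mem_support_append hwA hwR) hsupp' hedges' hcR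
      hac.symm hbc.symm

structure IsLinkage (G : SimpleGraph V) (C : Set V) (v : V) (c : Fin 3 → V)
    (P : ∀ i, G.Walk v (c i)) : Prop where
  notMem : v ∉ C
  end_mem : ∀ i, c i ∈ C
  isInducedPath : ∀ i, IsInducedPath G (P i)
  notMem_of_ne : ∀ i, ∀ w ∈ (P i).support, w ≠ v → w ≠ c i → w ∉ C
  exists_mem_edges : ∀ i, ∀ w ∈ (P i).support, w ∉ C → ∀ u ∈ C, G.Adj w u →
    ∃ j, s(w, u) ∈ (P j).edges
  eq_of_mem_support : ∀ i j, i ≠ j → ∀ w, w ∈ (P i).support → w ∈ (P j).support → w = v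
  adj_cases : ∀ i j, i ≠ j → ∀ a ∈ (P i).support, ∀ b ∈ (P j).support,
    G.Adj a b → a = v ∨ b = v ∨ (a ∈ C ∧ b ∈ C)

namespace IsLinkage
variable {C : Set V} {v : V} {c : Fin 3 → V} {P : ∀ i, G.Walk v (c i)}

lemma eq_of_mem_support_of_mem (hL : IsLinkage G C v c P) {i : Fin 3} {w : V}
    (hw : w ∈ (P i).support) (hwC : w ∈ C) : w = c i := by
  by_contra hne
  exact hL.notMem_of_ne i w hw (by rintro rfl; exact hL.notMem hwC) hne hwC

lemma injective (hL : IsLinkage G C v c P) : Function.Injective c := by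
  intro i j hij
  by_contra hne
  have hcj : c i ∈ (P j).support := by rw [hij]; exact (P j).end_mem_support
  have hv := hL.eq_of_mem_support i j hne (c i) (P i).end_mem_support hcj
  exact hL.notMem (hv ▸ hL.end_mem i)

lemma exists_mem_edges_of_notMem (hL : IsLinkage G C v c P) {i : Fin 3} {a b : V}
    (ha : a ∈ (P i).support) (haC : a ∉ C) (hb : b ∈ C ∨ ∃ j, b ∈ (P j).support)
    (hab : G.Adj a b) : ∃ j, s(a, b) ∈ (P j).edges := by
  rcases hb with hbC | ⟨j, hb⟩
  · exact hL.exists_mem_edges i a ha haC b hbC hab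
  by_cases hbi : b ∈ (P i).support
  · exact ⟨i, (hL.isInducedPath i).2 a ha b hbi hab⟩
  have hij : i ≠ j := by rintro rfl; exact hbi hb
  rcases hL.adj_cases i j hij a ha b hb hab with rfl | rfl | ⟨haC', -⟩
  · exact ⟨j, (hL.isInducedPath j).2 _ (P j).start_mem_support b hb hab⟩
  · exact ⟨i, (hL.isInducedPath i).2 a ha _ (P i).start_mem_support hab⟩
  · exact absurd haC' haC

lemma mem_edges_of_adj (hL : IsLinkage G C v c P) {a b : V}
    (ha : a ∈ C ∨ ∃ i, a ∈ (P i).support) (hb : b ∈ C ∨ ∃ j, b ∈ (P j).support)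
    (hab : G.Adj a b) : (∃ i, s(a, b) ∈ (P i).edges) ∨ (a ∈ C ∧ b ∈ C) := by
  by_cases haC : a ∈ C
  · by_cases hbC : b ∈ C
    · exact Or.inr ⟨haC, hbC⟩
    obtain ⟨j, hb⟩ := hb.resolve_left hbC
    obtain ⟨i, hi⟩ := hL.exists_mem_edges_of_notMem hb hbC (Or.inl haC) hab.symm
    exact Or.inl ⟨i, Sym2.eq_swap ▸ hi⟩
  · obtain ⟨i, ha⟩ := ha.resolve_left haC
    exact Or.inl (hL.exists_mem_edges_of_notMem ha haC hb hab)

end IsLinkage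

def k4Paths {v : V} {c : Fin 3 → V} (P : ∀ i, G.Walk v (c i)) (Q01 : G.Walk (c 0) (c 1))
    (Q02 : G.Walk (c 0) (c 2)) (Q12 : G.Walk (c 1) (c 2)) :
    ∀ i j : Fin 4, i < j → G.Walk (Matrix.vecCons v c i) (Matrix.vecCons v c j)
  | ⟨0, _⟩, ⟨1, _⟩, _ => P 0
  | ⟨0, _⟩, ⟨2, _⟩, _ => P 1
  | ⟨0, _⟩, ⟨3, _⟩, _ => P 2
  | ⟨1, _⟩, ⟨2, _⟩, _ => Q01
  | ⟨1, _⟩, ⟨3, _⟩, _ => Q02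
  | ⟨2, _⟩, ⟨3, _⟩, _ => Q12
  | _, ⟨0, _⟩, h => absurd h (Fin.not_lt_zero _)
  | ⟨_ + 1, _⟩, ⟨1, _⟩, h => absurd h (by simp [Fin.lt_def])
  | ⟨_ + 2, _⟩, ⟨2, _⟩, h => absurd h (by simp [Fin.lt_def])
  | ⟨_ + 3, _⟩, ⟨3, _⟩, h => absurd h (by simp [Fin.lt_def])

section k4Paths
variable {v : V} {c : Fin 3 → V} {P : ∀ i, G.Walk v (c i)} {Q01 : G.Walk (c 0) (c 1)}
  {Q02 : G.Walk (c 0) (c 2)} {Q12 : G.Walk (c 1) (c 2)}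

lemma mem_support_k4Paths {i j : Fin 4} {hij : i < j} {w : V}
    (hw : w ∈ (k4Paths P Q01 Q02 Q12 i j hij).support) :
    (∃ t, w ∈ (P t).support) ∨ w ∈ Q01.support ∨ w ∈ Q02.support ∨ w ∈ Q12.support := by
  fin_cases i <;> fin_cases j <;> (try simp at hij)
  exacts [Or.inl ⟨0, hw⟩, Or.inl ⟨1, hw⟩, Or.inl ⟨2, hw⟩, Or.inr (Or.inl hw),
    Or.inr (Or.inr (Or.inl hw)), Or.inr (Or.inr (Or.inr hw))]

lemma exists_mem_edges_k4Paths {e : Sym2 V}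
    (he : (∃ t, e ∈ (P t).edges) ∨ e ∈ Q01.edges ∨ e ∈ Q02.edges ∨ e ∈ Q12.edges) :
    ∃ i j h, e ∈ (k4Paths P Q01 Q02 Q12 i j h).edges := by
  rcases he with ⟨t, he⟩ | he | he | he
  · fin_cases t
    exacts [⟨0, 1, by decide, he⟩, ⟨0, 2, by decide, he⟩, ⟨0, 3, by decide, he⟩]
  exacts [⟨1, 2, by decide, he⟩, ⟨1, 3, by decide, he⟩, ⟨2, 3, by decide, he⟩]

end k4Paths

lemma IsLinkage.hasInducedK4Subdivision {C : Set V} {v : V} {c : Fin 3 → V}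
    {P : ∀ i, G.Walk v (c i)} (hL : IsLinkage G C v c P) {Q01 : G.Walk (c 0) (c 1)}
    {Q02 : G.Walk (c 0) (c 2)} {Q12 : G.Walk (c 1) (c 2)}
    (hQ : IsArcDecomposition C Q01 Q02 Q12) : HasInducedK4Subdivision G := by
  have hc := hL.injective
  have hvc : ∀ i, v ≠ c i := fun i h => hL.notMem (h ▸ hL.end_mem i)
  have hPC : ∀ i, ∀ w ∈ (P i).support, w ∈ C → w = c i := fun _ _ => hL.eq_of_mem_support_of_mem
  have hPP := hL.eq_of_mem_support
  have hQC : ∀ w, w ∈ Q01.support ∨ w ∈ Q02.support ∨ w ∈ Q12.support → w ∈ C :=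
    hQ.mem_of_mem_support
  have hQ01_02 := hQ.eq_of_mem_ab_ac
  have hQ01_12 := hQ.eq_of_mem_ab_bc
  have hQ02_12 := hQ.eq_of_mem_ac_bc
  have hc2Q01 := hQ.notMem_support_ab (hc.ne (by decide : (0 : Fin 3) ≠ 2))
  have hc1Q02 := hQ.notMem_support_ac (hc.ne (by decide : (0 : Fin 3) ≠ 1))
  have hc0Q12 := hQ.notMem_support_bc (hc.ne (by decide : (0 : Fin 3) ≠ 2))
  refine ⟨Matrix.vecCons v c, ?_, k4Paths P Q01 Q02 Q12, ?_, ?_, ?_⟩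
  · exact Fin.cons_injective_iff.2 ⟨fun ⟨i, hi⟩ => hvc i hi.symm, hc⟩
  · intro i j hij
    fin_cases i <;> fin_cases j <;> (try simp at hij)
    exacts [(hL.isInducedPath 0).1, (hL.isInducedPath 1).1, (hL.isInducedPath 2).1,
      hQ.isPath_ab, hQ.isPath_ac, hQ.isPath_bc]
  · intro i j hij k l hkl hne w hw1 hw2
    fin_cases i <;> fin_cases j <;> (try simp at hij) <;> fin_cases k <;> fin_cases l <;>
      (try simp at hkl) <;> (try simp at hne) <;>
      simp only [k4Paths, Fin.isValue, Fin.mk_one, Fin.reduceFinMk, Fin.zero_eta,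
        Matrix.cons_val, Matrix.cons_val_one, Matrix.cons_val_zero] at hw1 hw2 ⊢
    -- a vertex on two of the six paths is `v` (two spokes), the end `c i` of spoke `i`
    -- (a spoke and an arc), or the common end of two arcs
    all_goals grind
  · have hmem : ∀ w, (∃ i j h, w ∈ (k4Paths P Q01 Q02 Q12 i j h).support) →
        w ∈ C ∨ ∃ t, w ∈ (P t).support := by
      rintro w ⟨i, j, hij, hw⟩
      rcases mem_support_k4Paths hw with ht | hQw
      exacts [Or.inr ht, Or.inl (hQC w hQw)]
    intro x y hx hy hxy
    apply exists_mem_edges_k4Paths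
    rcases hL.mem_edges_of_adj (hmem x hx) (hmem y hy) hxy with ht | ⟨hxC, hyC⟩
    exacts [Or.inl ht, Or.inr (hQ.mem_edges_of_adj x hxC y hyC hxy)]

end

theorem no_vertex_linked_to_hole_general {V : Type*} (G : SimpleGraph V)
    (hI : ISK4Free G) :
    ¬ ∃ (C : Set V) (v : V) (c : Fin 3 → V) (P : ∀ i, G.Walk v (c i)),
      IsHole G C ∧ v ∉ C ∧ (∀ i, c i ∈ C) ∧
      (∀ i, IsInducedPath G (P i)) ∧
      -- the interiors of the paths, together with `v`, are disjoint from `C`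
      (∀ i, ∀ w ∈ (P i).support, w ≠ v → w ≠ c i → w ∉ C) ∧
      -- there are no edges between the paths and `C` other than the edges of the paths
      (∀ i, ∀ w ∈ (P i).support, w ∉ C → ∀ u ∈ C, G.Adj w u →
        ∃ j, s(w, u) ∈ (P j).edges) ∧
      -- distinct paths share only the vertex `v`
      (∀ i j, i ≠ j → ∀ w, w ∈ (P i).support → w ∈ (P j).support → w = v) ∧
      -- an edge between two distinct paths involves `v` or has both ends in `C`
      (∀ i j, i ≠ j → ∀ a ∈ (P i).support, ∀ b ∈ (P j).support,
        G.Adj a b → a = v ∨ b = v ∨ (a ∈ C ∧ b ∈ C)) ∧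
      -- every neighbor of `v` in `C` lies on one of the paths
      (∀ u ∈ C, G.Adj v u → ∃ i, u ∈ (P i).support) := by
  rintro ⟨C, v, c, P, hC, hvC, hcC, hInd, hIntC, hEdgeC, hShare, hCross, -⟩
  have hL : IsLinkage G C v c P := ⟨hvC, hcC, hInd, hIntC, hEdgeC, hShare, hCross⟩
  have hc := hL.injective
  obtain ⟨Q01, Q02, Q12, hQ⟩ := hC.1.exists_arcDecomposition (hcC 0) (hcC 1) (hcC 2)
    (hc.ne (by decide)) (hc.ne (by decide)) (hc.ne (by decide))
  exact hI (hL.hasInducedK4Subdivision hQ)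

/-- In an ISK4-free graph, no vertex can be linked to a hole. -/
theorem no_vertex_linked_to_hole {V : Type*} [Fintype V] (G : SimpleGraph V)
    (hI : ISK4Free G) :
    ¬ ∃ (C : Set V) (v : V) (c : Fin 3 → V) (P : ∀ i, G.Walk v (c i)),
      IsHole G C ∧ v ∉ C ∧ (∀ i, c i ∈ C) ∧
      (∀ i, IsInducedPath G (P i)) ∧
      -- the interiors of the paths, together with `v`, are disjoint from `C`
      (∀ i, ∀ w ∈ (P i).support, w ≠ v → w ≠ c i → w ∉ C) ∧
      -- there are no edges between the paths and `C` other than the edges of the paths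
      (∀ i, ∀ w ∈ (P i).support, w ∉ C → ∀ u ∈ C, G.Adj w u →
        ∃ j, s(w, u) ∈ (P j).edges) ∧
      -- distinct paths share only the vertex `v`
      (∀ i j, i ≠ j → ∀ w, w ∈ (P i).support → w ∈ (P j).support → w = v) ∧
      -- an edge between two distinct paths involves `v` or has both ends in `C`
      (∀ i j, i ≠ j → ∀ a ∈ (P i).support, ∀ b ∈ (P j).support,
        G.Adj a b → a = v ∨ b = v ∨ (a ∈ C ∧ b ∈ C)) ∧
      -- every neighbor of `v` in `C` lies on one of the paths
      (∀ u ∈ C, G.Adj v u → ∃ i, u ∈ (P i).support) :=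
  no_vertex_linked_to_hole_general G hI
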